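/- Let Λ be a g-frame for H with synthesis operator T_Λ. If Γ† and Γ‡ are two g-Bessel sequences such that T_{Λ^d} T_{Γ†}* = T_{Λ^d} T_{Γ‡}* for every dual g-frame Λ^d of Λ, then Γ† = Γ‡ (i.e., T_{Γ†}* = T_{Γ‡}*). -/

import Mathlib

/-!
The lower frame bound makes the analysis operator `TΛ†` bounded below, so it has closed range
and, in a Hilbert space, a bounded left inverse `L₀`. The duals of `Λ` correspond exactly to the
bounded left inverses of `TΛ†`, and with `L₀` every `L₀ + Φ` with `Φ ∘ TΛ† = 0` is one of them.
Hence `v = (TΓ1† - TΓ2†) x` satisfies `L₀ v = 0` and `Φ v = 0` for all such `Φ`. Taking for `Φ`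
a rank-one map composed with the projection `1 - TΛ† L₀` (which kills `range TΛ†` and fixes `v`)
forces `v = 0`.
-/

open ContinuousLinearMap

namespace ContinuousLinearMap

section LeftInverse

variable {𝕜 E F G : Type*} [NontriviallyNormedField 𝕜]
  [NormedAddCommGroup E] [NormedSpace 𝕜 E] [NormedAddCommGroup F] [NormedSpace 𝕜 F]
  [NormedAddCommGroup G] [NormedSpace 𝕜 G] {A : E →L[𝕜] F} {D₁ D₂ : G →L[𝕜] F}

theorem comp_eq_comp_of_comp_eq_zero_of_forall_leftInverse {L₀ : F →L[𝕜] E}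
    (hL₀ : Function.LeftInverse L₀ A)
    (h : ∀ L : F →L[𝕜] E, Function.LeftInverse L A → L ∘L D₁ = L ∘L D₂)
    {Φ : F →L[𝕜] E} (hΦ : Φ ∘L A = 0) : Φ ∘L D₁ = Φ ∘L D₂ := by
  have hL : Function.LeftInverse (L₀ + Φ) A := fun x => by
    simpa [hL₀ x] using congr($hΦ x)
  simpa [add_comp, h L₀ hL₀] using h _ hL

theorem eq_of_forall_leftInverse_comp_eq [Nontrivial E] [SeparatingDual 𝕜 F]
    (hA : A.HasLeftInverse)
    (h : ∀ L : F →L[𝕜] E, Function.LeftInverse L A → L ∘L D₁ = L ∘L D₂) : D₁ = D₂ := by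
  obtain ⟨L₀, hL₀⟩ := hA
  ext x
  by_contra hne
  set v := D₁ x - D₂ x
  have hv : L₀ v = 0 := by simpa [v, sub_eq_zero] using congr($(h L₀ hL₀) x)
  obtain ⟨f, hf⟩ := SeparatingDual.exists_eq_one (R := 𝕜) (x := v) (sub_ne_zero.mpr hne)
  obtain ⟨w, hw⟩ := exists_ne (0 : E)
  set Φ : F →L[𝕜] E := f.smulRight w ∘L (ContinuousLinearMap.id 𝕜 F - A ∘L L₀)
  have hΦA : Φ ∘L A = 0 := by ext y; simp [Φ, hL₀ y]
  have hΦv : Φ v = w := by simp [Φ, hv, hf]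
  apply hw
  simpa [← hΦv, v, sub_eq_zero] using
    congr($(comp_eq_comp_of_comp_eq_zero_of_forall_leftInverse hL₀ h hΦA) x)

end LeftInverse

theorem antilipschitz_of_mul_sq_norm_le {𝕜 E F : Type*} [NontriviallyNormedField 𝕜]
    [NormedAddCommGroup E] [NormedSpace 𝕜 E] [NormedAddCommGroup F] [NormedSpace 𝕜 F]
    (A : E →L[𝕜] F) {c : ℝ} (hc : 0 < c) (h : ∀ x, c * ‖x‖ ^ 2 ≤ ‖A x‖ ^ 2) :
    AntilipschitzWith (Real.toNNReal (√c)⁻¹) A := by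
  refine A.antilipschitz_of_bound fun x => ?_
  have hsc : 0 < √c := Real.sqrt_pos.mpr hc
  rw [Real.coe_toNNReal _ (by positivity), inv_mul_eq_div, le_div_iff₀ hsc, mul_comm]
  refine (pow_le_pow_iff_left₀ (by positivity) (norm_nonneg _) two_ne_zero).mp ?_
  rw [mul_pow, Real.sq_sqrt hc.le]
  exact h x

theorem HasLeftInverse.of_antilipschitz {𝕜 E F : Type*} [RCLike 𝕜]
    [NormedAddCommGroup E] [NormedSpace 𝕜 E] [CompleteSpace E]
    [NormedAddCommGroup F] [InnerProductSpace 𝕜 F] [CompleteSpace F]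
    {A : E →L[𝕜] F} {K : NNReal} (hA : AntilipschitzWith K A) : A.HasLeftInverse := by
  have hclosed : IsClosed (Set.range A) := hA.isClosed_range A.uniformContinuous
  have : CompleteSpace A.range :=
    (by rwa [LinearMap.coe_range] : IsClosed (A.range : Set F)).completeSpace_coe
  exact .of_injective_of_isClosed_range_of_closedComplement_range hA.injective hclosed
    A.range.isTopCompl_orthogonal.closedComplemented

end ContinuousLinearMap

theorem lp.norm_sq_eq_tsum {ι : Type*} {K : ι → Type*} [∀ i, NormedAddCommGroup (K i)]
    (f : lp K 2) : ‖f‖ ^ 2 = ∑' i, ‖f i‖ ^ 2 := by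
  simpa using lp.norm_rpow_eq_tsum (p := 2) (by norm_num) f

theorem uniqueness_from_all_duals_general
    {ι H : Type*} {K : ι → Type*}
    [NormedAddCommGroup H] [InnerProductSpace ℂ H] [CompleteSpace H]
    [∀ i, NormedAddCommGroup (K i)] [∀ i, InnerProductSpace ℂ (K i)]
    [∀ i, CompleteSpace (K i)]
    (Λ : ∀ i, H →L[ℂ] K i) (AΛ BΛ : ℝ) (hAΛ : 0 < AΛ)
    (hframeΛ : ∀ x : H, AΛ * ‖x‖ ^ 2 ≤ (∑' i, ‖Λ i x‖ ^ 2) ∧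
      (∑' i, ‖Λ i x‖ ^ 2) ≤ BΛ * ‖x‖ ^ 2)
    (TΛ : lp K 2 →L[ℂ] H)
    (hTΛ : ∀ x : H, ∀ i, (adjoint TΛ x) i = Λ i x)
    (Γ1 Γ2 : ∀ i, H →L[ℂ] K i)
    (TΓ1 TΓ2 : lp K 2 →L[ℂ] H)
    (hTΓ1 : ∀ x : H, ∀ i, (adjoint TΓ1 x) i = Γ1 i x)
    (hTΓ2 : ∀ x : H, ∀ i, (adjoint TΓ2 x) i = Γ2 i x)
    (h : ∀ (Λd : ∀ i, H →L[ℂ] K i) (TΛd : lp K 2 →L[ℂ] H),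
      (∀ x : H, ∀ i, (adjoint TΛd x) i = Λd i x) →
      TΛ.comp (adjoint TΛd) = ContinuousLinearMap.id ℂ H →
      TΛd.comp (adjoint TΓ1) = TΛd.comp (adjoint TΓ2)) :
    Γ1 = Γ2 := by
  rcases subsingleton_or_nontrivial H with hH | hH
  · funext i; ext x; simp [Subsingleton.elim x 0]
  have hlower (x : H) : AΛ * ‖x‖ ^ 2 ≤ ‖adjoint TΛ x‖ ^ 2 := by
    simpa only [lp.norm_sq_eq_tsum, hTΛ] using (hframeΛ x).1
  have hleft : (adjoint TΛ).HasLeftInverse :=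
    .of_antilipschitz (antilipschitz_of_mul_sq_norm_le _ hAΛ hlower)
  have hadj : adjoint TΓ1 = adjoint TΓ2 := by
    refine eq_of_forall_leftInverse_comp_eq hleft fun L hL => ?_
    -- `L` is the synthesis operator of the dual `Λd i = (L† ·) i`.
    refine h (fun i => lp.evalCLM ℂ K 2 i ∘L adjoint L) L (fun _ _ => rfl) ?_
    have hL' : L ∘L adjoint TΛ = ContinuousLinearMap.id ℂ H := ext hL
    simpa only [adjoint_comp, adjoint_adjoint, adjoint_id] using congr(adjoint $hL')
  funext i; ext x
  rw [← hTΓ1, ← hTΓ2, hadj]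

/-- If two g-Bessel sequences Γ†, Γ‡ satisfy
T_{Λᵈ} T_{Γ†}* = T_{Λᵈ} T_{Γ‡}* for every dual g-frame Λᵈ of a g-frame Λ,
then Γ† = Γ‡. -/
theorem uniqueness_from_all_duals
    {ι H : Type*} {K : ι → Type*}
    [NormedAddCommGroup H] [InnerProductSpace ℂ H] [CompleteSpace H]
    [∀ i, NormedAddCommGroup (K i)] [∀ i, InnerProductSpace ℂ (K i)]
    [∀ i, CompleteSpace (K i)]
    (Λ : ∀ i, H →L[ℂ] K i) (AΛ BΛ : ℝ) (hAΛ : 0 < AΛ)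
    (hsumΛ : ∀ x : H, Summable fun i => ‖Λ i x‖ ^ 2)
    (hframeΛ : ∀ x : H, AΛ * ‖x‖ ^ 2 ≤ (∑' i, ‖Λ i x‖ ^ 2) ∧
      (∑' i, ‖Λ i x‖ ^ 2) ≤ BΛ * ‖x‖ ^ 2)
    (TΛ : lp K 2 →L[ℂ] H)
    (hTΛ : ∀ x : H, ∀ i, (adjoint TΛ x) i = Λ i x)
    (Γ1 Γ2 : ∀ i, H →L[ℂ] K i) (B1 B2 : ℝ)
    (hsum1 : ∀ x : H, Summable fun i => ‖Γ1 i x‖ ^ 2)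
    (hBessel1 : ∀ x : H, (∑' i, ‖Γ1 i x‖ ^ 2) ≤ B1 * ‖x‖ ^ 2)
    (hsum2 : ∀ x : H, Summable fun i => ‖Γ2 i x‖ ^ 2)
    (hBessel2 : ∀ x : H, (∑' i, ‖Γ2 i x‖ ^ 2) ≤ B2 * ‖x‖ ^ 2)
    (TΓ1 TΓ2 : lp K 2 →L[ℂ] H)
    (hTΓ1 : ∀ x : H, ∀ i, (adjoint TΓ1 x) i = Γ1 i x)
    (hTΓ2 : ∀ x : H, ∀ i, (adjoint TΓ2 x) i = Γ2 i x)
    (h : ∀ (Λd : ∀ i, H →L[ℂ] K i) (TΛd : lp K 2 →L[ℂ] H),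
      (∀ x : H, ∀ i, (adjoint TΛd x) i = Λd i x) →
      TΛ.comp (adjoint TΛd) = ContinuousLinearMap.id ℂ H →
      TΛd.comp (adjoint TΓ1) = TΛd.comp (adjoint TΓ2)) :
    Γ1 = Γ2 :=
  uniqueness_from_all_duals_general Λ AΛ BΛ hAΛ hframeΛ TΛ hTΛ Γ1 Γ2 TΓ1 TΓ2 hTΓ1 hTΓ2 h
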